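/- Suppose μ_i ≥ λ_{i+1} for all 1 ≤ i < n (the skew shape λ/μ is a disjoint union of rows), let N = |λ|−|μ| and consider weight 1 = (1,…,1) of length N, so m = N+1. Then the map sending a matrix x to the n×N matrix a with a_{i,j} = x^{j+1}_i − x^j_i (1 ≤ i ≤ n, 1 ≤ j ≤ N) is a bijection from the set of integral GT-patterns of shape λ/μ and weight 1 onto the set of n×N matrices of nonnegative integers whose i-th row sums to λ_i − μ_i for every i and whose j-th column sums to 1 for every j (contingency matrices with row sums λ_i − μ_i and all column sums 1). -/

import Mathlib

/-!
A pattern `x` is determined by its bottom row `μ` and its increments `a_{i,j} = x^{j+1}_i - x^j_i`,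
since `x^j_i = μ_i + a_{i,1} + ⋯ + a_{i,j-1}`; so the increment map is injective, with inverse
"`μ` plus partial sums". Under this correspondence the weight becomes the column sums, the top row
`λ` the row sums, and the vertical GT inequalities `x^j_i ≤ x^{j+1}_i` the nonnegativity of `a`.
The diagonal inequalities `x^{j+1}_{i+1} ≤ x^j_i` are automatic when `λ/μ` is a disjoint union of
rows, because `x^j_i` increases in `j` from `μ_i` to `λ_i`: `x^{j+1}_{i+1} ≤ λ_{i+1} ≤ μ_i ≤ x^j_i`.
-/

open Finset

/-- A real `(m+1) × n` array satisfying the Gelfand–Tsetlin inequalities: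
rows increase upwards along columns, and down-right diagonals decrease.
Row `0` is the bottom row, row `m` the top row. -/
def IsGTPattern (m n : ℕ) (x : Fin (m + 1) → Fin n → ℝ) : Prop :=
  (∀ (i : Fin m) (j : Fin n), x i.castSucc j ≤ x i.succ j) ∧
  (∀ (i : Fin m) (j : Fin n) (h : (j : ℕ) + 1 < n),
    x i.succ ⟨(j : ℕ) + 1, h⟩ ≤ x i.castSucc j)

/-- The Gelfand–Tsetlin polytope `P_{λ/μ,w}`: row `0` is `μ`, row `m` is `λ`,
and the weight vector `w` has `m` entries, prescribing the successive
differences of row sums. -/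
def gtPolytope (m n : ℕ) (lam mu : Fin n → ℤ) (w : Fin m → ℤ) :
    Set (Fin (m + 1) → Fin n → ℝ) :=
  {x | IsGTPattern m n x ∧ (∀ j, x 0 j = (mu j : ℝ)) ∧
    (∀ j, x (Fin.last m) j = (lam j : ℝ)) ∧
    ∀ i : Fin m, (∑ j, x i.succ j) - (∑ j, x i.castSucc j) = (w i : ℝ)}

namespace Fin

variable {n : ℕ}

theorem partialSum_last {M : Type*} [AddCommMonoid M] (f : Fin n → M) :
    partialSum f (last n) = ∑ i, f i := by
  induction n with
  | zero => simp
  | succ n ih =>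
    rw [← succ_last, partialSum_succ, ← partialSum_init, ih, sum_univ_castSucc]
    rfl

theorem monotone_partialSum {M : Type*} [AddCommMonoid M] [PartialOrder M]
    [IsOrderedAddMonoid M] {f : Fin n → M} (hf : 0 ≤ f) : Monotone (partialSum f) :=
  monotone_iff_le_succ.mpr fun j => by
    rw [partialSum_succ]
    exact le_add_of_nonneg_right (hf j)

theorem add_partialSum_sub {G : Type*} [AddCommGroup G] (x : Fin (n + 1) → G) (j : Fin (n + 1)) :
    x 0 + partialSum (fun k => x k.succ - x k.castSucc) j = x j := by
  simpa [neg_add_eq_sub] using congrFun (partialSum_left_neg x) j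

theorem map_partialSum {M M' F : Type*} [AddMonoid M] [AddMonoid M'] [FunLike F M M']
    [AddMonoidHomClass F M M'] (φ : F) (f : Fin n → M) (j : Fin (n + 1)) :
    φ (partialSum f j) = partialSum (φ ∘ f) j := by
  induction j using Fin.induction with
  | zero => simp
  | succ j ih => simp [partialSum_succ, ih]

end Fin

section GelfandTsetlin

variable {N n : ℕ}

def rowIncrements (x : Fin (N + 1) → Fin n → ℝ) : Fin n → Fin N → ℝ :=
  fun i j => x j.succ i - x j.castSucc i

def patternOfIncrements (mu : Fin n → ℤ) (a : Fin n → Fin N → ℝ) : Fin (N + 1) → Fin n → ℝ :=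
  fun j i => mu i + Fin.partialSum (a i) j

def IsDisjointUnionOfRows (lam mu : Fin n → ℤ) : Prop :=
  ∀ i : Fin n, ∀ h : (i : ℕ) + 1 < n, lam ⟨(i : ℕ) + 1, h⟩ ≤ mu i

def integralGTPatterns (lam mu : Fin n → ℤ) (w : Fin N → ℤ) : Set (Fin (N + 1) → Fin n → ℝ) :=
  {x | x ∈ gtPolytope N n lam mu w ∧ ∀ i j, ∃ z : ℤ, x i j = z}

def contingencyMatrices (r : Fin n → ℝ) (c : Fin N → ℝ) : Set (Fin n → Fin N → ℝ) :=
  {a | (∀ i j, ∃ z : ℤ, a i j = z) ∧ (∀ i j, 0 ≤ a i j) ∧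
    (∀ i, ∑ j, a i j = r i) ∧ ∀ j, ∑ i, a i j = c j}

theorem rowIncrements_patternOfIncrements (mu : Fin n → ℤ) (a : Fin n → Fin N → ℝ) :
    rowIncrements (patternOfIncrements mu a) = a := by
  ext i j
  simp [rowIncrements, patternOfIncrements, Fin.partialSum_succ]

theorem patternOfIncrements_rowIncrements {mu : Fin n → ℤ} {x : Fin (N + 1) → Fin n → ℝ}
    (h0 : ∀ i, x 0 i = mu i) : patternOfIncrements mu (rowIncrements x) = x := by
  ext j i
  rw [patternOfIncrements, ← h0]
  exact Fin.add_partialSum_sub (fun j => x j i) j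

theorem sum_rowIncrements (x : Fin (N + 1) → Fin n → ℝ) (j : Fin N) :
    ∑ i, rowIncrements x i j = ∑ i, x j.succ i - ∑ i, x j.castSucc i :=
  sum_sub_distrib _ _

theorem patternOfIncrements_last (mu : Fin n → ℤ) (a : Fin n → Fin N → ℝ) (i : Fin n) :
    patternOfIncrements mu a (Fin.last N) i = mu i + ∑ j, a i j := by
  rw [patternOfIncrements, Fin.partialSum_last]

theorem mapsTo_rowIncrements (lam mu : Fin n → ℤ) (w : Fin N → ℤ) :
    Set.MapsTo rowIncrements (integralGTPatterns lam mu w)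
      (contingencyMatrices (fun i => lam i - mu i) (fun j => w j)) := by
  rintro x ⟨⟨⟨hup, -⟩, h0, hlast, hw⟩, hint⟩
  refine ⟨fun i j => ?_, fun i j => sub_nonneg.mpr (hup j i), fun i => ?_, fun j => ?_⟩
  · obtain ⟨z, hz⟩ := hint j.succ i
    obtain ⟨z', hz'⟩ := hint j.castSucc i
    exact ⟨z - z', by simp [rowIncrements, hz, hz']⟩
  · have := patternOfIncrements_last mu (rowIncrements x) i
    rw [patternOfIncrements_rowIncrements h0, hlast] at this
    linarith
  · exact (sum_rowIncrements x j).trans (hw j)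

theorem isGTPattern_patternOfIncrements {lam mu : Fin n → ℤ}
    (hdisj : IsDisjointUnionOfRows lam mu) {a : Fin n → Fin N → ℝ} (hpos : ∀ i j, 0 ≤ a i j)
    (hrow : ∀ i, ∑ j, a i j = lam i - mu i) :
    IsGTPattern N n (patternOfIncrements mu a) := by
  have hmono : ∀ i, Monotone fun j => patternOfIncrements mu a j i := fun i =>
    (Fin.monotone_partialSum (hpos i)).const_add _
  refine ⟨fun j i => hmono i j.castSucc_le_succ, fun j i h => ?_⟩
  calc patternOfIncrements mu a j.succ ⟨i + 1, h⟩
      ≤ patternOfIncrements mu a (Fin.last N) ⟨i + 1, h⟩ := hmono _ (Fin.le_last _)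
    _ = lam ⟨i + 1, h⟩ := by rw [patternOfIncrements_last, hrow]; ring
    _ ≤ mu i := by exact_mod_cast hdisj i h
    _ = patternOfIncrements mu a 0 i := by simp [patternOfIncrements]
    _ ≤ patternOfIncrements mu a j.castSucc i := hmono i (Fin.zero_le _)

theorem mapsTo_patternOfIncrements {lam mu : Fin n → ℤ} (w : Fin N → ℤ)
    (hdisj : IsDisjointUnionOfRows lam mu) :
    Set.MapsTo (patternOfIncrements mu)
      (contingencyMatrices (fun i => lam i - mu i) (fun j => w j))
      (integralGTPatterns lam mu w) := by
  rintro a ⟨hint, hpos, hrow, hcol⟩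
  refine ⟨⟨isGTPattern_patternOfIncrements hdisj hpos hrow, fun i => ?_, fun i => ?_, fun j => ?_⟩,
    fun j i => ?_⟩
  · simp [patternOfIncrements]
  · rw [patternOfIncrements_last, hrow]; ring
  · rw [← sum_rowIncrements, rowIncrements_patternOfIncrements]
    exact hcol j
  · choose z hz using hint
    refine ⟨mu i + Fin.partialSum (z i) j, ?_⟩
    rw [patternOfIncrements, show a i = Int.castAddHom ℝ ∘ z i from funext (hz i),
      ← Fin.map_partialSum]
    push_cast
    rfl

theorem bijOn_rowIncrements {lam mu : Fin n → ℤ} (w : Fin N → ℤ)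
    (hdisj : IsDisjointUnionOfRows lam mu) :
    Set.BijOn rowIncrements (integralGTPatterns lam mu w)
      (contingencyMatrices (fun i => lam i - mu i) (fun j => w j)) :=
  Set.InvOn.bijOn (f' := patternOfIncrements mu)
    ⟨fun _ hx => patternOfIncrements_rowIncrements hx.1.2.1,
      fun a _ => rowIncrements_patternOfIncrements mu a⟩
    (mapsTo_rowIncrements lam mu w) (mapsTo_patternOfIncrements w hdisj)

end GelfandTsetlin

theorem statement19_general (n : ℕ) (lam mu : Fin n → ℤ)
    (hdisj : ∀ i : Fin n, ∀ h : (i : ℕ) + 1 < n, lam ⟨(i : ℕ) + 1, h⟩ ≤ mu i)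
    (N : ℕ) :
    Set.BijOn
      (fun (x : Fin (N + 1) → Fin n → ℝ) (i : Fin n) (j : Fin N) =>
        x j.succ i - x j.castSucc i)
      {x | x ∈ gtPolytope N n lam mu (fun _ => 1) ∧ ∀ i j, ∃ z : ℤ, x i j = (z : ℝ)}
      {a : Fin n → Fin N → ℝ |
        (∀ i j, ∃ z : ℤ, a i j = (z : ℝ)) ∧ (∀ i j, 0 ≤ a i j) ∧
        (∀ i, ∑ j, a i j = ((lam i : ℝ) - (mu i : ℝ))) ∧
        ∀ j, ∑ i, a i j = 1} := by
  have h := bijOn_rowIncrements (fun _ : Fin N => 1) hdisj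
  simp only [contingencyMatrices, Int.cast_one] at h
  exact h

/-- When `λ/μ` is a disjoint union of rows and `N = |λ|-|μ|`, the map
`x ↦ (a_{i,j}) = (x^{j+1}_i - x^j_i)` is a bijection from the integral
GT-patterns of shape `λ/μ` and weight `1` onto the `n × N` contingency
matrices of nonnegative integers with row sums `λ_i - μ_i` and all column
sums `1`. -/
theorem statement19 (n : ℕ) (hn : 1 ≤ n) (lam mu : Fin n → ℤ)
    (hlam : Antitone lam) (hmu : Antitone mu)
    (hmu0 : ∀ j, 0 ≤ mu j) (hge : ∀ j, mu j ≤ lam j)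
    (hdisj : ∀ i : Fin n, ∀ h : (i : ℕ) + 1 < n, lam ⟨(i : ℕ) + 1, h⟩ ≤ mu i)
    (N : ℕ) (hN : (N : ℤ) = ∑ j, lam j - ∑ j, mu j) :
    Set.BijOn
      (fun (x : Fin (N + 1) → Fin n → ℝ) (i : Fin n) (j : Fin N) =>
        x j.succ i - x j.castSucc i)
      {x | x ∈ gtPolytope N n lam mu (fun _ => 1) ∧ ∀ i j, ∃ z : ℤ, x i j = (z : ℝ)}
      {a : Fin n → Fin N → ℝ |
        (∀ i j, ∃ z : ℤ, a i j = (z : ℝ)) ∧ (∀ i j, 0 ≤ a i j) ∧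
        (∀ i, ∑ j, a i j = ((lam i : ℝ) - (mu i : ℝ))) ∧
        ∀ j, ∑ i, a i j = 1} :=
  statement19_general n lam mu hdisj N
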